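/- (Continuity of the utility loss) Fix event times t_1 < … < t_M with counts n_i > 0 and 0 ≤ d_i ≤ n_i, and fix a time t. The utility loss ΔS(t; ε) = |∏_{t_i ≤ t} (1 − d_i/n_i) − ∏_{t_i ≤ t} (1 − (d_i + ε_i)/(n_i + ε_i))|, viewed as a function of the noise vector ε ∈ [0,∞)^M, satisfies ΔS(t; ε) ≤ ∑_{i=1}^M ε_i/n_i for all ε, and hence ΔS(t; ε) → 0 as ε → 0. -/

import Mathlib

/-!
Each Kaplan–Meier factor `1 - d/n` lies in `[0, 1]`, and for factors of norm at most one a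
product is `1`-Lipschitz in each factor, so the two estimators differ by at most the sum of the
factorwise differences. Adding `ε` to both counts raises `d/n` by `ε (n - d) / (n (n + ε)) ≤ ε/n`.
The resulting bound is continuous in `ε` and vanishes at `0`.
-/

open Finset Filter Topology

theorem Finset.norm_prod_sub_prod_le_sum_norm_sub {ι R : Type*} [NormedCommRing R]
    [NormOneClass R] (s : Finset ι) {f g : ι → R} (hf : ∀ i ∈ s, ‖f i‖ ≤ 1)
    (hg : ∀ i ∈ s, ‖g i‖ ≤ 1) :
    ‖∏ i ∈ s, f i - ∏ i ∈ s, g i‖ ≤ ∑ i ∈ s, ‖f i - g i‖ := by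
  classical
  induction s using Finset.induction_on with
  | empty => simp
  | insert a s ha ih =>
    simp only [Finset.forall_mem_insert] at hf hg
    have hprod_g : ‖∏ i ∈ s, g i‖ ≤ 1 :=
      (s.norm_prod_le g).trans (prod_le_one (fun _ _ => norm_nonneg _) hg.2)
    rw [prod_insert ha, prod_insert ha, sum_insert ha]
    calc ‖f a * ∏ i ∈ s, f i - g a * ∏ i ∈ s, g i‖
        = ‖f a * (∏ i ∈ s, f i - ∏ i ∈ s, g i) + (f a - g a) * ∏ i ∈ s, g i‖ := by ring_nf
      _ ≤ ‖f a‖ * ‖∏ i ∈ s, f i - ∏ i ∈ s, g i‖ + ‖f a - g a‖ * ‖∏ i ∈ s, g i‖ :=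
        (norm_add_le _ _).trans (add_le_add (norm_mul_le _ _) (norm_mul_le _ _))
      _ ≤ 1 * ∑ i ∈ s, ‖f i - g i‖ + ‖f a - g a‖ * 1 := by
        gcongr
        exacts [hf.1, ih hf.2 hg.2]
      _ = ‖f a - g a‖ + ∑ i ∈ s, ‖f i - g i‖ := by ring

theorem abs_one_sub_div_le_one {d n : ℝ} (hd : 0 ≤ d) (hdn : d ≤ n) : |1 - d / n| ≤ 1 := by
  have h0 : 0 ≤ d / n := div_nonneg hd (hd.trans hdn)
  have h1 : d / n ≤ 1 := div_le_one_of_le₀ hdn (hd.trans hdn)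
  rw [abs_le]
  constructor <;> linarith

theorem abs_add_div_add_sub_div_le {d n ε : ℝ} (hn : 0 < n) (hd : 0 ≤ d) (hdn : d ≤ n)
    (hε : 0 ≤ ε) : |(d + ε) / (n + ε) - d / n| ≤ ε / n := by
  have hnε : 0 < n + ε := by linarith
  have hdiff : (d + ε) / (n + ε) - d / n = ε * (n - d) / (n * (n + ε)) := by
    field_simp
    ring
  rw [hdiff, abs_of_nonneg (by have := sub_nonneg.mpr hdn; positivity),
    div_le_div_iff₀ (by positivity) hn]
  nlinarith [mul_nonneg (mul_nonneg hε hn.le) (add_nonneg hd hε)]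

theorem abs_prod_one_sub_div_sub_prod_one_sub_add_div_le {ι : Type*} (s : Finset ι)
    {d n ε : ι → ℝ} (hn : ∀ i, 0 < n i) (hd : ∀ i, 0 ≤ d i) (hdn : ∀ i, d i ≤ n i)
    (hε : ∀ i, 0 ≤ ε i) :
    |∏ i ∈ s, (1 - d i / n i) - ∏ i ∈ s, (1 - (d i + ε i) / (n i + ε i))|
      ≤ ∑ i ∈ s, ε i / n i := by
  refine (s.norm_prod_sub_prod_le_sum_norm_sub (f := fun i => 1 - d i / n i)
    (g := fun i => 1 - (d i + ε i) / (n i + ε i)) (fun i _ => abs_one_sub_div_le_one (hd i) (hdn i))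
    (fun i _ => abs_one_sub_div_le_one (add_nonneg (hd i) (hε i))
      (add_le_add_left (hdn i) _))).trans (sum_le_sum fun i _ => ?_)
  rw [Real.norm_eq_abs, sub_sub_sub_cancel_left]
  exact abs_add_div_add_sub_div_le (hn i) (hd i) (hdn i) (hε i)

theorem utility_loss_bound_and_tendsto_zero_general (M : ℕ) (τ d n : Fin M → ℝ)
    (hn : ∀ i, 0 < n i) (hd0 : ∀ i, 0 ≤ d i)
    (hdn : ∀ i, d i ≤ n i) (t : ℝ) :
    (∀ ε : Fin M → ℝ, (∀ i, 0 ≤ ε i) →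
        |(∏ i ∈ univ.filter (fun i => τ i ≤ t), (1 - d i / n i))
            - ∏ i ∈ univ.filter (fun i => τ i ≤ t), (1 - (d i + ε i) / (n i + ε i))|
          ≤ ∑ i, ε i / n i) ∧
      Tendsto
        (fun ε : Fin M → ℝ =>
          |(∏ i ∈ univ.filter (fun i => τ i ≤ t), (1 - d i / n i))
            - ∏ i ∈ univ.filter (fun i => τ i ≤ t), (1 - (d i + ε i) / (n i + ε i))|)
        (𝓝[{ε : Fin M → ℝ | ∀ i, 0 ≤ ε i}] 0) (𝓝 0) := by
  have hbound := fun (ε : Fin M → ℝ) (hε : ∀ i, 0 ≤ ε i) =>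
    (abs_prod_one_sub_div_sub_prod_one_sub_add_div_le (univ.filter fun i => τ i ≤ t)
      hn hd0 hdn hε).trans (sum_le_univ_sum_of_nonneg fun i => div_nonneg (hε i) (hn i).le)
  have hsum : Tendsto (fun ε : Fin M → ℝ => ∑ i, ε i / n i) (𝓝 0) (𝓝 0) := by
    have hcont : Continuous fun ε : Fin M → ℝ => ∑ i, ε i / n i := by fun_prop
    simpa using hcont.tendsto 0
  refine ⟨hbound, squeeze_zero' (Eventually.of_forall fun _ => abs_nonneg _) ?_
    (hsum.mono_left nhdsWithin_le_nhds)⟩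
  filter_upwards [self_mem_nhdsWithin] with ε hε using hbound ε hε

/-- Continuity of the utility loss: viewed as a function of the noise vector
`ε ∈ [0,∞)^M`, the utility loss `ΔS(t; ε)` is bounded by `∑ ε_i/n_i` and hence tends
to `0` as `ε → 0`. -/
theorem utility_loss_bound_and_tendsto_zero (M : ℕ) (τ d n : Fin M → ℝ)
    (hτ : StrictMono τ) (hn : ∀ i, 0 < n i) (hd0 : ∀ i, 0 ≤ d i)
    (hdn : ∀ i, d i ≤ n i) (t : ℝ) :
    (∀ ε : Fin M → ℝ, (∀ i, 0 ≤ ε i) →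
        |(∏ i ∈ univ.filter (fun i => τ i ≤ t), (1 - d i / n i))
            - ∏ i ∈ univ.filter (fun i => τ i ≤ t), (1 - (d i + ε i) / (n i + ε i))|
          ≤ ∑ i, ε i / n i) ∧
      Tendsto
        (fun ε : Fin M → ℝ =>
          |(∏ i ∈ univ.filter (fun i => τ i ≤ t), (1 - d i / n i))
            - ∏ i ∈ univ.filter (fun i => τ i ≤ t), (1 - (d i + ε i) / (n i + ε i))|)
        (𝓝[{ε : Fin M → ℝ | ∀ i, 0 ≤ ε i}] 0) (𝓝 0) :=
  utility_loss_bound_and_tendsto_zero_general M τ d n hn hd0 hdn t
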